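/- (Soundness and completeness of normalisation) For every PDDL formula F, every polarity z, and every world w: w ⊨_z F if and only if w ∈ ⟨w_{⟦F⟧_z}⟩. -/

import Mathlib

/-- A polarity is `+` or `-`. -/
inductive Polarity : Type
  | pos
  | neg
deriving DecidableEq

/-- Negation of polarities: −+ = − and −− = +. -/
def Polarity.negP : Polarity → Polarity
  | pos => neg
  | neg => pos

/-- A state is a finite list of formula maps `A ↦ z`, represented as pairs `(a, z)`.
`emp` is `[]` and `(A ↦ z) * S` is `(a, z) :: S`. -/
abbrev PState (A : Type) : Type := List (A × Polarity)

/-- The subtyping relation `<:` on states: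
(NilSub) `S <: emp`; (ASub) `S' <: (A ↦ z) * S` whenever `S' <: S` and `(A ↦ z) ∈ S'`. -/
inductive StSub {A : Type} : PState A → PState A → Prop
  | nil (S : PState A) : StSub S []
  | cons {S' S : PState A} {a : A} {z : Polarity} :
      StSub S' S → (a, z) ∈ S' → StSub S' ((a, z) :: S)

/-- `A ∈ S` iff `(A ↦ +) ∈ S` or `(A ↦ −) ∈ S`. -/
def atomMem {A : Type} (a : A) (S : PState A) : Prop :=
  (a, Polarity.pos) ∈ S ∨ (a, Polarity.neg) ∈ S

/-- The override operator `⊔`: `P ⊔ emp = P`, and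
`P ⊔ ((A ↦ z) * Q) = ((A ↦ z) * (P with every formula map for the atom A removed)) ⊔ Q`. -/
def override {A : Type} [DecidableEq A] : PState A → PState A → PState A
  | P, [] => P
  | P, (a, z) :: Q => override ((a, z) :: P.filter (fun p => p.1 ≠ a)) Q

/-- `w ∈ ⟨w_S⟩`: `w` is a well-formed world for the state `S`. -/
def WfWorld {A : Type} (w : Set A) (S : PState A) : Prop :=
  ∀ a : A, ((a, Polarity.pos) ∈ S → a ∈ w) ∧ ((a, Polarity.neg) ∈ S → a ∉ w)

/-- PDDL formulae: ground atoms, negated ground atoms, and conjunctions. -/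
inductive Form (A : Type) : Type
  | atom (a : A)
  | natom (a : A)
  | conj (F F1 : Form A)

/-- Satisfaction of an atom: `w ⊨_+ A` iff `A ∈ w`; `w ⊨_− A` iff `A ∉ w`. -/
def satAtom {A : Type} (w : Set A) : Polarity → A → Prop
  | Polarity.pos, a => a ∈ w
  | Polarity.neg, a => a ∉ w

/-- Satisfaction `w ⊨_z F`; `w ⊨_z ¬A` iff `w ⊨_{−z} A`. -/
def sat {A : Type} (w : Set A) : Polarity → Form A → Prop
  | z, Form.atom a => satAtom w z a
  | z, Form.natom a => satAtom w z.negP a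
  | z, Form.conj F F1 => sat w z F ∧ sat w z F1

/-- Normalisation of formulae to states:
`⟦A⟧_z S = (A ↦ z) * S`, `⟦¬A⟧_z S = ⟦A⟧_{−z} S`, `⟦F ∧ F1⟧_z S = ⟦F1⟧_z (⟦F⟧_z S)`. -/
def normF {A : Type} : Form A → Polarity → PState A → PState A
  | Form.atom a, z, S => (a, z) :: S
  | Form.natom a, z, S => (a, z.negP) :: S
  | Form.conj F F1, z, S => normF F1 z (normF F z S)

theorem wfWorld_iff_forall_mem {A : Type} {w : Set A} {S : PState A} :
    WfWorld w S ↔ ∀ p ∈ S, satAtom w p.2 p.1 := by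
  constructor
  · rintro h ⟨a, z⟩ hp
    cases z
    exacts [(h a).1 hp, (h a).2 hp]
  · intro h a
    exact ⟨h (a, .pos), h (a, .neg)⟩

theorem wfWorld_nil {A : Type} (w : Set A) : WfWorld w [] :=
  wfWorld_iff_forall_mem.2 fun _ => List.not_mem_nil.elim

theorem wfWorld_cons {A : Type} {w : Set A} {a : A} {z : Polarity} {S : PState A} :
    WfWorld w ((a, z) :: S) ↔ satAtom w z a ∧ WfWorld w S := by
  simp only [wfWorld_iff_forall_mem, List.forall_mem_cons]

theorem wfWorld_normF {A : Type} {w : Set A} (F : Form A) (z : Polarity) (S : PState A) :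
    WfWorld w (normF F z S) ↔ sat w z F ∧ WfWorld w S := by
  induction F generalizing S with
  | atom a => exact wfWorld_cons
  | natom a => exact wfWorld_cons
  | conj F F1 ih ih1 => rw [normF, sat, ih1, ih, and_assoc, and_left_comm]

theorem normalisation_sound_complete_general {A : Type}
    (F : Form A) (z : Polarity) (w : Set A) :
    sat w z F ↔ WfWorld w (normF F z []) := by
  rw [wfWorld_normF, and_iff_left (wfWorld_nil w)]

theorem normalisation_sound_complete {A : Type} [DecidableEq A]
    (F : Form A) (z : Polarity) (w : Set A) :
    sat w z F ↔ WfWorld w (normF F z []) :=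
  normalisation_sound_complete_general F z w
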